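/- Let v₀=(1,0,0), v₁=((1/2)e^{iπ/9}, (√3/2)e^{2iπ/9}, 0), v₂=((1/2)e^{-iπ/9}, i/2, 1/√2) in ℂ³. Then ⟨v₀,v₁⟩ = ⟨v₁,v₂⟩ = ⟨v₂,v₀⟩ = (1/2)e^{iπ/9}; in particular the Gram matrix of (v₀,v₁,v₂) is circulant. -/
import Mathlib

open Matrix Complex

noncomputable def v₀ : Fin 3 → ℂ := ![1, 0, 0]
noncomputable def v₁ : Fin 3 → ℂ :=
  ![(1 / 2 : ℂ) * Complex.exp (Real.pi * Complex.I / 9),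
    ((Real.sqrt 3 : ℂ) / 2) * Complex.exp (2 * Real.pi * Complex.I / 9), 0]
noncomputable def v₂ : Fin 3 → ℂ :=
  ![(1 / 2 : ℂ) * Complex.exp (-(Real.pi * Complex.I / 9)),
    Complex.I / 2, ((Real.sqrt 2 : ℂ))⁻¹]

lemma hconj1 : (starRingEnd ℂ) (Complex.exp (Real.pi * Complex.I / 9)) =
    Complex.exp (-(Real.pi * Complex.I / 9)) := by
  rw [← Complex.exp_conj, map_div₀, _root_.map_mul, Complex.conj_ofReal, Complex.conj_I,
    map_ofNat]
  congr 1; ring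

lemma hconj1' : (starRingEnd ℂ) (Complex.exp (-(Real.pi * Complex.I / 9))) =
    Complex.exp (Real.pi * Complex.I / 9) := by
  rw [← Complex.exp_conj, map_neg, map_div₀, _root_.map_mul, Complex.conj_ofReal,
    Complex.conj_I, map_ofNat]
  congr 1; ring

lemma hconj2 : (starRingEnd ℂ) (Complex.exp (2 * Real.pi * Complex.I / 9)) =
    Complex.exp (-(2 * Real.pi * Complex.I / 9)) := by
  rw [← Complex.exp_conj, map_div₀, _root_.map_mul, _root_.map_mul, Complex.conj_ofReal,
    Complex.conj_I, map_ofNat, map_ofNat]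
  congr 1; ring

lemma hexp3 : Complex.exp (Real.pi * Complex.I / 3) =
    1 / 2 + (Real.sqrt 3 : ℂ) / 2 * Complex.I := by
  rw [show (Real.pi * Complex.I / 3 : ℂ) = ((Real.pi / 3 : ℝ) : ℂ) * Complex.I by
    push_cast; ring, Complex.exp_mul_I]
  rw [← Complex.ofReal_cos, ← Complex.ofReal_sin, Real.cos_pi_div_three, Real.sin_pi_div_three]
  push_cast; ring

lemma hexp3' : Complex.exp (-(Real.pi * Complex.I / 3)) =
    1 / 2 - (Real.sqrt 3 : ℂ) / 2 * Complex.I := by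
  have h := congrArg (starRingEnd ℂ) hexp3
  simp only [← Complex.exp_conj, map_div₀, _root_.map_mul, map_add, _root_.map_one,
    map_ofNat, Complex.conj_ofReal, Complex.conj_I] at h
  rw [show (-(Real.pi * Complex.I / 3) : ℂ) = (Real.pi : ℂ) * -Complex.I / 3 by ring, h]
  ring

lemma sq3 : (Real.sqrt 3 : ℂ) * (Real.sqrt 3 : ℂ) = 3 := by
  rw [show (Real.sqrt 3 : ℂ) * (Real.sqrt 3 : ℂ) = ((Real.sqrt 3 * Real.sqrt 3 : ℝ) : ℂ) by
    push_cast; ring, Real.mul_self_sqrt (by norm_num)]; norm_num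

lemma sq2 : ((Real.sqrt 2 : ℂ))⁻¹ * ((Real.sqrt 2 : ℂ))⁻¹ = 1 / 2 := by
  rw [← mul_inv, show (Real.sqrt 2 : ℂ) * (Real.sqrt 2 : ℂ) = ((Real.sqrt 2 * Real.sqrt 2 : ℝ) : ℂ) by
    push_cast; ring, Real.mul_self_sqrt (by norm_num)]; norm_num

lemma g01 : star v₀ ⬝ᵥ v₁ = (1 / 2 : ℂ) * Complex.exp (Real.pi * Complex.I / 9) := by
  simp [v₀, v₁, dotProduct, Fin.sum_univ_three]

lemma g12 : star v₁ ⬝ᵥ v₂ = (1 / 2 : ℂ) * Complex.exp (Real.pi * Complex.I / 9) := by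
  simp only [v₁, v₂, dotProduct, Fin.sum_univ_three, Pi.star_apply, Matrix.cons_val_zero,
    Matrix.cons_val_one, Matrix.head_cons, Matrix.cons_val_two, Matrix.tail_cons,
    RCLike.star_def, _root_.map_mul, map_div₀, _root_.map_one, map_zero, map_ofNat, Complex.conj_ofReal,
    hconj1, hconj2]
  have h : Complex.exp (-(Real.pi * Complex.I / 9)) * Complex.exp (-(Real.pi * Complex.I / 9)) =
      Complex.exp (-(2 * Real.pi * Complex.I / 9)) := by
    rw [← Complex.exp_add]; congr 1; ring
  have h2 : Complex.exp (-(2 * Real.pi * Complex.I / 9)) * Complex.exp (Real.pi * Complex.I / 3) =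
      Complex.exp (Real.pi * Complex.I / 9) := by
    rw [← Complex.exp_add]; congr 1; ring
  linear_combination (1/4 : ℂ) * h + (1/2 : ℂ) * h2 -
    (1/2 : ℂ) * Complex.exp (-(2 * Real.pi * Complex.I / 9)) * hexp3

lemma g20 : star v₂ ⬝ᵥ v₀ = (1 / 2 : ℂ) * Complex.exp (Real.pi * Complex.I / 9) := by
  simp only [v₂, v₀, dotProduct, Fin.sum_univ_three, Pi.star_apply, Matrix.cons_val_zero,
    Matrix.cons_val_one, Matrix.head_cons, Matrix.cons_val_two, Matrix.tail_cons,
    RCLike.star_def, _root_.map_mul, map_div₀, _root_.map_one, map_zero, map_ofNat, hconj1']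
  ring

lemma g10 : star v₁ ⬝ᵥ v₀ = (1 / 2 : ℂ) * Complex.exp (-(Real.pi * Complex.I / 9)) := by
  simp only [v₁, v₀, dotProduct, Fin.sum_univ_three, Pi.star_apply, Matrix.cons_val_zero,
    Matrix.cons_val_one, Matrix.head_cons, Matrix.cons_val_two, Matrix.tail_cons,
    RCLike.star_def, _root_.map_mul, map_div₀, _root_.map_one, map_zero, map_ofNat, hconj1]
  ring

lemma g21 : star v₂ ⬝ᵥ v₁ = (1 / 2 : ℂ) * Complex.exp (-(Real.pi * Complex.I / 9)) := by
  simp only [v₂, v₁, dotProduct, Fin.sum_univ_three, Pi.star_apply, Matrix.cons_val_zero,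
    Matrix.cons_val_one, Matrix.head_cons, Matrix.cons_val_two, Matrix.tail_cons,
    RCLike.star_def, _root_.map_mul, map_div₀, _root_.map_one, map_zero, map_ofNat, Complex.conj_I, hconj1']
  have h : Complex.exp (Real.pi * Complex.I / 9) * Complex.exp (Real.pi * Complex.I / 9) =
      Complex.exp (2 * Real.pi * Complex.I / 9) := by
    rw [← Complex.exp_add]; congr 1; ring
  have h2 : Complex.exp (2 * Real.pi * Complex.I / 9) * Complex.exp (-(Real.pi * Complex.I / 3)) =
      Complex.exp (-(Real.pi * Complex.I / 9)) := by
    rw [← Complex.exp_add]; congr 1; ring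
  linear_combination (1/4 : ℂ) * h + (1/2 : ℂ) * h2 -
    (1/2 : ℂ) * Complex.exp (2 * Real.pi * Complex.I / 9) * hexp3'

lemma g02 : star v₀ ⬝ᵥ v₂ = (1 / 2 : ℂ) * Complex.exp (-(Real.pi * Complex.I / 9)) := by
  simp [v₀, v₂, dotProduct, Fin.sum_univ_three]

lemma g00 : star v₀ ⬝ᵥ v₀ = 1 := by
  simp [v₀, dotProduct, Fin.sum_univ_three]

lemma g11 : star v₁ ⬝ᵥ v₁ = 1 := by
  simp only [v₁, dotProduct, Fin.sum_univ_three, Pi.star_apply, Matrix.cons_val_zero,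
    Matrix.cons_val_one, Matrix.head_cons, Matrix.cons_val_two, Matrix.tail_cons,
    RCLike.star_def, _root_.map_mul, map_div₀, _root_.map_one, map_zero, map_ofNat, Complex.conj_ofReal,
    hconj1, hconj2]
  have h : Complex.exp (-(Real.pi * Complex.I / 9)) * Complex.exp (Real.pi * Complex.I / 9) = 1 := by
    rw [← Complex.exp_add]; simp
  have h2 : Complex.exp (-(2 * Real.pi * Complex.I / 9)) *
      Complex.exp (2 * Real.pi * Complex.I / 9) = 1 := by
    rw [← Complex.exp_add]; simp
  linear_combination (1/4 : ℂ) * h +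
    ((Real.sqrt 3 : ℂ) * (Real.sqrt 3 : ℂ) / 4) * h2 + (1/4 : ℂ) * sq3

lemma g22 : star v₂ ⬝ᵥ v₂ = 1 := by
  simp only [v₂, dotProduct, Fin.sum_univ_three, Pi.star_apply, Matrix.cons_val_zero,
    Matrix.cons_val_one, Matrix.head_cons, Matrix.cons_val_two, Matrix.tail_cons,
    RCLike.star_def, _root_.map_mul, map_div₀, _root_.map_one, map_zero, map_ofNat, map_inv₀,
    Complex.conj_ofReal, Complex.conj_I, hconj1']
  have h : Complex.exp (Real.pi * Complex.I / 9) * Complex.exp (-(Real.pi * Complex.I / 9)) = 1 := by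
    rw [← Complex.exp_add]; simp
  linear_combination (1/4 : ℂ) * h + sq2 - (1/4 : ℂ) * Complex.I_sq

lemma mk2 : (⟨2, by omega⟩ : Fin 3) = 2 := rfl

theorem stmt12 (V : Fin 3 → (Fin 3 → ℂ)) (hV : V = ![v₀, v₁, v₂]) :
    (star v₀ ⬝ᵥ v₁ = (1 / 2 : ℂ) * Complex.exp (Real.pi * Complex.I / 9) ∧
     star v₁ ⬝ᵥ v₂ = (1 / 2 : ℂ) * Complex.exp (Real.pi * Complex.I / 9) ∧
     star v₂ ⬝ᵥ v₀ = (1 / 2 : ℂ) * Complex.exp (Real.pi * Complex.I / 9)) ∧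
    (∀ j k : Fin 3, star (V j) ⬝ᵥ V k = star (V (j + 1)) ⬝ᵥ V (k + 1)) := by
  subst hV
  refine ⟨⟨g01, g12, g20⟩, ?_⟩
  intro j k
  fin_cases j <;> fin_cases k <;>
    simp only [Fin.isValue, Fin.mk_zero, Fin.mk_one, mk2,
      show ((0 : Fin 3) + 1) = 1 from rfl,
      show ((1 : Fin 3) + 1) = 2 from rfl, show ((2 : Fin 3) + 1) = 0 from rfl,
      Matrix.cons_val_zero, Matrix.cons_val_one, Matrix.head_cons, Matrix.cons_val_two,
      Matrix.tail_cons, g00, g01, g02, g10, g11, g12, g20, g21, g22]
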